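/- Let V ⊆ ℂⁿ be open, Φ : V → ℝ continuous, Ψ̃ : V × V → ℂ continuous, C₀ > 0 and M > 0. Assume Re Ψ̃(y,y) = Φ(y) for all y ∈ V and 2 Re Ψ̃(x,y) ≤ Φ(x) + Φ(y) − (1/C₀)|x−y|² for all x, y ∈ V. Let b : V × V → ℂ be measurable with |b| ≤ M, and for h > 0 and measurable u define Π̃u(x) := h^{−n} ∫_V e^{(2/h)(Ψ̃(x,y) − Ψ̃(y,y))} b(x,y) u(y) dL(y). Then there exists C₁ > 0, depending only on n, C₀ and M, such that for every h ∈ (0,1] and every measurable u : V → ℂ with ‖u‖_{L²_Φ(V)} < ∞, the integral defining Π̃u(x) converges absolutely for almost every x ∈ V and ‖Π̃u‖_{L²_Φ(V)} ≤ C₁ ‖u‖_{L²_Φ(V)}. -/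

import Mathlib

/-! Since `Re Ψ̃(y,y) = Φ(y)`, the upper bound on `2 Re Ψ̃` gives
`|e^{(2/h)(Ψ̃(x,y) - Ψ̃(y,y))}| ≤ e^{Φ(x)/h} e^{-|x-y|²/(C₀h)} e^{-Φ(y)/h}`. Hence, after
conjugation by the weight `e^{-Φ/h}`, the operator `Π̃` is dominated pointwise by `M h^{-n}` times
the Gaussian kernel `e^{-|x-y|²/(C₀h)}`, whose row and column integrals over `ℂⁿ ≅ ℝ^{2n}` are
`(π C₀ h)^n`. The Schur test then bounds `Π̃` on `L²_Φ(V)` by `C₁ = M (π C₀)^n`. -/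

open Complex MeasureTheory

noncomputable section

/-- `ℂⁿ` with its Euclidean (Hermitian) norm. -/
abbrev En (n : ℕ) := EuclideanSpace ℂ (Fin n)

instance (n : ℕ) : MeasurableSpace (En n) := borel _
instance (n : ℕ) : BorelSpace (En n) := ⟨rfl⟩
/-- The real inner product structure, giving Lebesgue measure (`volume`) on `ℂⁿ ≅ ℝ^{2n}`. -/
instance (n : ℕ) : InnerProductSpace ℝ (En n) := InnerProductSpace.rclikeToReal ℂ (En n)

/-- The (possibly infinite) weighted `L²` norm `‖u‖_{L²_Φ(V)}`. -/
def wNormE (n : ℕ) (V : Set (En n)) (Φ : En n → ℝ) (h : ℝ) (u : En n → ℂ) : ENNReal :=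
  (∫⁻ x in V, ENNReal.ofReal (‖u x‖ ^ 2 * Real.exp (-(2 * Φ x) / h))) ^ (1/2 : ℝ)

/-- The Bergman-type operator
`Π̃u(x) = h^{−n} ∫_V e^{(2/h)(Ψ̃(x,y) − Ψ̃(y,y))} b(x,y) u(y) dL(y)`. -/
def PiOp (n : ℕ) (V : Set (En n)) (Ψt b : En n → En n → ℂ) (h : ℝ)
    (u : En n → ℂ) (x : En n) : ℂ :=
  ((h ^ n : ℝ) : ℂ)⁻¹ *
    ∫ y in V, Complex.exp (((2 / h : ℝ) : ℂ) * (Ψt x y - Ψt y y)) * b x y * u y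

open scoped ENNReal
open Module Function

section Schur

variable {α β : Type*} [MeasurableSpace α] [MeasurableSpace β] {μ : Measure α} {ν : Measure β}

theorem ENNReal.sq_lintegral_mul_le {k f : α → ℝ≥0∞} (hk : AEMeasurable k μ)
    (hf : AEMeasurable f μ) :
    (∫⁻ a, k a * f a ∂μ) ^ 2 ≤ (∫⁻ a, k a ∂μ) * ∫⁻ a, k a * f a ^ 2 ∂μ := by
  have holder : ∫⁻ a, k a ^ (1 / 2 : ℝ) * (k a * f a ^ 2) ^ (1 / 2 : ℝ) ∂μ ≤
      (∫⁻ a, k a ∂μ) ^ (1 / 2 : ℝ) * (∫⁻ a, k a * f a ^ 2 ∂μ) ^ (1 / 2 : ℝ) :=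
    ENNReal.lintegral_mul_norm_pow_le hk (hk.mul (hf.pow_const 2))
      (by norm_num) (by norm_num) (by norm_num)
  have sqrt_sq : ∀ x : ℝ≥0∞, (x ^ (1 / 2 : ℝ)) ^ 2 = x := fun x => by
    rw [← ENNReal.rpow_natCast, ← ENNReal.rpow_mul]; norm_num
  have split : ∀ a, k a ^ (1 / 2 : ℝ) * (k a * f a ^ 2) ^ (1 / 2 : ℝ) = k a * f a := fun a => by
    rw [ENNReal.mul_rpow_of_nonneg _ _ (by norm_num), ← mul_assoc, ← sq, sqrt_sq,
      ← ENNReal.rpow_natCast, ← ENNReal.rpow_mul]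
    norm_num
  simp only [split] at holder
  calc (∫⁻ a, k a * f a ∂μ) ^ 2
      ≤ ((∫⁻ a, k a ∂μ) ^ (1 / 2 : ℝ) * (∫⁻ a, k a * f a ^ 2 ∂μ) ^ (1 / 2 : ℝ)) ^ 2 :=
        pow_le_pow_left' holder 2
    _ = (∫⁻ a, k a ∂μ) * ∫⁻ a, k a * f a ^ 2 ∂μ := by rw [mul_pow, sqrt_sq, sqrt_sq]

variable [SFinite μ] [SFinite ν] {k : α → β → ℝ≥0∞} {f : β → ℝ≥0∞} {A B : ℝ≥0∞}

theorem schur_test_lintegral_sq_le (hk : Measurable (uncurry k)) (hf : AEMeasurable f ν)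
    (hrow : ∀ x, ∫⁻ y, k x y ∂ν ≤ A) (hcol : ∀ y, ∫⁻ x, k x y ∂μ ≤ B) :
    ∫⁻ x, (∫⁻ y, k x y * f y ∂ν) ^ 2 ∂μ ≤ A * B * ∫⁻ y, f y ^ 2 ∂ν := by
  have hk_left : ∀ x, Measurable (k x) := fun x => hk.comp measurable_prodMk_left
  have hF : AEMeasurable (uncurry fun x y => k x y * f y ^ 2) (μ.prod ν) :=
    hk.aemeasurable.mul (hf.pow_const 2).comp_snd
  have hk_right : ∀ y, Measurable (k · y) := fun y => hk.comp measurable_prodMk_right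
  calc ∫⁻ x, (∫⁻ y, k x y * f y ∂ν) ^ 2 ∂μ
      ≤ ∫⁻ x, A * ∫⁻ y, k x y * f y ^ 2 ∂ν ∂μ := lintegral_mono fun x =>
        (ENNReal.sq_lintegral_mul_le (hk_left x).aemeasurable hf).trans
          (mul_le_mul_left (hrow x) _)
    _ = A * ∫⁻ y, (∫⁻ x, k x y ∂μ) * f y ^ 2 ∂ν := by
        rw [lintegral_const_mul'' _ hF.lintegral_prod_right, lintegral_lintegral_swap hF]
        simp_rw [lintegral_mul_const'' _ (hk_right _).aemeasurable]
    _ ≤ A * ∫⁻ y, B * f y ^ 2 ∂ν := by gcongr with y; exact hcol y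
    _ = A * B * ∫⁻ y, f y ^ 2 ∂ν := by rw [lintegral_const_mul'' _ (hf.pow_const 2), mul_assoc]

theorem schur_test_ae_lintegral_mul_lt_top (hk : Measurable (uncurry k)) (hf : AEMeasurable f ν)
    (hrow : ∀ x, ∫⁻ y, k x y ∂ν ≤ A) (hcol : ∀ y, ∫⁻ x, k x y ∂μ ≤ B) (hA : A ≠ ∞) (hB : B ≠ ∞)
    (hf2 : ∫⁻ y, f y ^ 2 ∂ν ≠ ∞) :
    ∀ᵐ x ∂μ, ∫⁻ y, k x y * f y ∂ν < ∞ := by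
  have hT : AEMeasurable (fun x => ∫⁻ y, k x y * f y ∂ν) μ :=
    (hk.aemeasurable.mul hf.comp_snd).lintegral_prod_right'
  have hT2 := ((schur_test_lintegral_sq_le hk hf hrow hcol).trans_lt
    (ENNReal.mul_lt_top (ENNReal.mul_lt_top hA.lt_top hB.lt_top) hf2.lt_top)).ne
  filter_upwards [ae_lt_top' (hT.pow_const 2) hT2] with x hx
  exact (ENNReal.pow_lt_top_iff.mp hx).resolve_right two_ne_zero

end Schur

section Gaussian

variable {E : Type*} [NormedAddCommGroup E]

def gaussKernel (c M : ℝ) (x y : E) : ℝ≥0∞ := ENNReal.ofReal (M * Real.exp (-c * ‖x - y‖ ^ 2))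

theorem gaussKernel_comm (c M : ℝ) (x y : E) : gaussKernel c M x y = gaussKernel c M y x := by
  rw [gaussKernel, gaussKernel, norm_sub_rev]

variable [InnerProductSpace ℝ E] [FiniteDimensional ℝ E] [MeasurableSpace E] [BorelSpace E]

theorem measurable_gaussKernel (c M : ℝ) : Measurable (uncurry (gaussKernel (E := E) c M)) :=
  ENNReal.measurable_ofReal.comp (by fun_prop)

theorem lintegral_exp_neg_mul_norm_sub_sq {c : ℝ} (hc : 0 < c) (y : E) :
    ∫⁻ x, ENNReal.ofReal (Real.exp (-c * ‖x - y‖ ^ 2)) =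
      ENNReal.ofReal ((Real.pi / c) ^ (finrank ℝ E / 2 : ℝ)) := by
  have hint : ∫ x : E, Real.exp (-c * ‖x‖ ^ 2) = (Real.pi / c) ^ (finrank ℝ E / 2 : ℝ) :=
    GaussianFourier.integral_rexp_neg_mul_sq_norm hc
  -- the Bochner integral of a non-integrable function is `0`
  have hgauss : Integrable fun x : E => Real.exp (-c * ‖x‖ ^ 2) :=
    Integrable.of_integral_ne_zero (by rw [hint]; positivity)
  rw [lintegral_sub_right_eq_self (fun x => ENNReal.ofReal (Real.exp (-c * ‖x‖ ^ 2))) y,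
    ← hint, ofReal_integral_eq_lintegral_ofReal hgauss (ae_of_all _ fun x => (Real.exp_pos _).le)]

theorem setLIntegral_gaussKernel_le {c M : ℝ} (hc : 0 < c) (hM : 0 ≤ M) (s : Set E) (x : E) :
    ∫⁻ y in s, gaussKernel c M x y ≤
      ENNReal.ofReal (M * (Real.pi / c) ^ (finrank ℝ E / 2 : ℝ)) := by
  simp_rw [gaussKernel_comm c M x, gaussKernel, ENNReal.ofReal_mul hM]
  rw [lintegral_const_mul' _ _ ENNReal.ofReal_ne_top, ← lintegral_exp_neg_mul_norm_sub_sq hc x]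
  gcongr
  exact Measure.restrict_le_self

end Gaussian

theorem finrank_real_En (n : ℕ) : finrank ℝ (En n) = 2 * n := by
  rw [← finrank_mul_finrank ℝ ℂ (En n), Complex.finrank_real_complex, finrank_euclideanSpace,
    Fintype.card_fin]

theorem setLIntegral_gaussKernel_En_le {n : ℕ} {C₀ M h : ℝ} (hC₀ : 0 < C₀) (hh : 0 < h)
    (hM : 0 ≤ M) (s : Set (En n)) (x : En n) :
    ∫⁻ y in s, gaussKernel (1 / (C₀ * h)) M x y ≤
      ENNReal.ofReal (h ^ n) * ENNReal.ofReal (M * (Real.pi * C₀) ^ n) := by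
  have hbound := setLIntegral_gaussKernel_le (by positivity : 0 < 1 / (C₀ * h)) hM s x
  rw [finrank_real_En, Nat.cast_mul, Nat.cast_ofNat, mul_div_cancel_left₀ _ two_ne_zero,
    Real.rpow_natCast] at hbound
  refine hbound.trans_eq ?_
  rw [← ENNReal.ofReal_mul (by positivity)]
  congr 1
  field_simp
  ring

section Bergman

variable {E : Type*} [NormedAddCommGroup E]

def piIntegrand (Ψt b : E → E → ℂ) (h : ℝ) (u : E → ℂ) (x y : E) : ℂ :=
  Complex.exp (((2 / h : ℝ) : ℂ) * (Ψt x y - Ψt y y)) * b x y * u y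

def weightedENorm (Φ : E → ℝ) (h : ℝ) (u : E → ℂ) (x : E) : ℝ≥0∞ :=
  ‖u x‖ₑ * ENNReal.ofReal (Real.exp (-Φ x / h))

theorem enorm_piIntegrand_le {Φ : E → ℝ} {Ψt b : E → E → ℂ} {u : E → ℂ} {C₀ M h : ℝ}
    (hh : 0 < h) {x y : E} (hdiag : (Ψt y y).re = Φ y)
    (hub : 2 * (Ψt x y).re ≤ Φ x + Φ y - (1 / C₀) * ‖x - y‖ ^ 2) (hbM : ‖b x y‖ ≤ M) :
    ‖piIntegrand Ψt b h u x y‖ₑ ≤ ENNReal.ofReal (Real.exp (Φ x / h)) *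
      (gaussKernel (1 / (C₀ * h)) M x y * weightedENorm Φ h u y) := by
  have hM : 0 ≤ M := (norm_nonneg _).trans hbM
  have hphase : (2 / h) * ((Ψt x y).re - (Ψt y y).re) ≤
      Φ x / h + (-(1 / (C₀ * h)) * ‖x - y‖ ^ 2 + -Φ y / h) := by
    rw [hdiag, ← sub_nonneg]
    have key : 0 ≤ (Φ x + Φ y - (1 / C₀) * ‖x - y‖ ^ 2 - 2 * (Ψt x y).re) / h :=
      div_nonneg (by linarith) hh.le
    convert key using 1
    field_simp
    ring
  have hreal : ‖piIntegrand Ψt b h u x y‖ ≤ Real.exp (Φ x / h) *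
      (M * Real.exp (-(1 / (C₀ * h)) * ‖x - y‖ ^ 2) * (‖u y‖ * Real.exp (-Φ y / h))) := by
    calc ‖piIntegrand Ψt b h u x y‖
        = Real.exp ((2 / h) * ((Ψt x y).re - (Ψt y y).re)) * ‖b x y‖ * ‖u y‖ := by
          rw [piIntegrand, norm_mul, norm_mul, Complex.norm_exp, Complex.re_ofReal_mul,
            Complex.sub_re]
      _ ≤ Real.exp (Φ x / h + (-(1 / (C₀ * h)) * ‖x - y‖ ^ 2 + -Φ y / h)) * M * ‖u y‖ := by
          gcongr
      _ = _ := by rw [Real.exp_add, Real.exp_add]; ring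
  calc ‖piIntegrand Ψt b h u x y‖ₑ
      = ENNReal.ofReal ‖piIntegrand Ψt b h u x y‖ := (ofReal_norm _).symm
    _ ≤ _ := ENNReal.ofReal_le_ofReal hreal
    _ = _ := by
      rw [ENNReal.ofReal_mul (by positivity), ENNReal.ofReal_mul (by positivity),
        ENNReal.ofReal_mul (norm_nonneg _), ofReal_norm]
      rfl

variable [MeasurableSpace E]

theorem aestronglyMeasurable_piIntegrand [OpensMeasurableSpace E] {μ : Measure E} {V : Set E}
    (hV : MeasurableSet V) {Ψt b : E → E → ℂ}
    (hΨt : ContinuousOn (fun p : E × E => Ψt p.1 p.2) (V ×ˢ V))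
    (hb : Measurable fun p : E × E => b p.1 p.2) {u : E → ℂ} (hu : Measurable u) (h : ℝ)
    {x : E} (hx : x ∈ V) :
    AEStronglyMeasurable (piIntegrand Ψt b h u x) (μ.restrict V) := by
  have hrow : ContinuousOn (Ψt x) V :=
    hΨt.comp (Continuous.prodMk_right x).continuousOn fun y hy => Set.mk_mem_prod hx hy
  have hdiag : ContinuousOn (fun y => Ψt y y) V :=
    hΨt.comp (continuous_id.prodMk continuous_id).continuousOn fun y hy => Set.mk_mem_prod hy hy
  have hphase : ContinuousOn (fun y => Complex.exp (((2 / h : ℝ) : ℂ) * (Ψt x y - Ψt y y))) V :=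
    Complex.continuous_exp.comp_continuousOn (continuousOn_const.mul (hrow.sub hdiag))
  exact ((hphase.aestronglyMeasurable hV).mul
    (hb.comp measurable_prodMk_left).aestronglyMeasurable).mul hu.aestronglyMeasurable

theorem setLIntegral_enorm_piIntegrand_le {μ : Measure E} {V : Set E} (hV : MeasurableSet V)
    {Φ : E → ℝ} {Ψt b : E → E → ℂ} {u : E → ℂ} {C₀ M h : ℝ} (hh : 0 < h)
    (hdiag : ∀ y ∈ V, (Ψt y y).re = Φ y)
    (hub : ∀ x ∈ V, ∀ y ∈ V, 2 * (Ψt x y).re ≤ Φ x + Φ y - (1 / C₀) * ‖x - y‖ ^ 2)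
    (hbM : ∀ x ∈ V, ∀ y ∈ V, ‖b x y‖ ≤ M) {x : E} (hx : x ∈ V) :
    ∫⁻ y in V, ‖piIntegrand Ψt b h u x y‖ₑ ∂μ ≤ ENNReal.ofReal (Real.exp (Φ x / h)) *
      ∫⁻ y in V, gaussKernel (1 / (C₀ * h)) M x y * weightedENorm Φ h u y ∂μ := by
  rw [← lintegral_const_mul' _ _ ENNReal.ofReal_ne_top]
  refine setLIntegral_mono_ae' hV (ae_of_all _ fun y hy => ?_)
  exact enorm_piIntegrand_le hh (hdiag y hy) (hub x hx y hy) (hbM x hx y hy)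

end Bergman

theorem wNormE_sq (n : ℕ) (V : Set (En n)) (Φ : En n → ℝ) (h : ℝ) (u : En n → ℂ) :
    wNormE n V Φ h u ^ 2 = ∫⁻ x in V, weightedENorm Φ h u x ^ 2 := by
  rw [wNormE, ← ENNReal.rpow_natCast, ← ENNReal.rpow_mul,
    show (1 / 2 : ℝ) * (2 : ℕ) = 1 by norm_num, ENNReal.rpow_one]
  refine lintegral_congr fun x => ?_
  rw [weightedENorm, ← ofReal_norm, ← ENNReal.ofReal_mul (norm_nonneg _),
    ← ENNReal.ofReal_pow (by positivity), mul_pow, ← Real.exp_nat_mul]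
  ring_nf

theorem weightedENorm_PiOp_le {n : ℕ} {V : Set (En n)} {Φ : En n → ℝ} {Ψt b : En n → En n → ℂ}
    {h : ℝ} (hh : 0 < h) {u : En n → ℂ} {x : En n} {T : ℝ≥0∞}
    (hT : ∫⁻ y in V, ‖piIntegrand Ψt b h u x y‖ₑ ≤ ENNReal.ofReal (Real.exp (Φ x / h)) * T) :
    weightedENorm Φ h (PiOp n V Ψt b h u) x ≤ ENNReal.ofReal (h ^ n)⁻¹ * T := by
  have hnorm : ‖PiOp n V Ψt b h u x‖ₑ ≤
      ENNReal.ofReal (h ^ n)⁻¹ * (ENNReal.ofReal (Real.exp (Φ x / h)) * T) := by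
    rw [PiOp, enorm_mul, ← ofReal_norm, norm_inv, Complex.norm_real,
      Real.norm_of_nonneg (by positivity)]
    exact mul_le_mul_right ((enorm_integral_le_lintegral_enorm _).trans hT) _
  calc weightedENorm Φ h (PiOp n V Ψt b h u) x
      ≤ ENNReal.ofReal (h ^ n)⁻¹ * (ENNReal.ofReal (Real.exp (Φ x / h)) * T) *
          ENNReal.ofReal (Real.exp (-Φ x / h)) := mul_le_mul_left hnorm _
    _ = ENNReal.ofReal (h ^ n)⁻¹ * T := by
      rw [mul_comm (ENNReal.ofReal _) T, mul_assoc, mul_assoc, ← ENNReal.ofReal_mul (by positivity),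
        ← Real.exp_add, neg_div, add_neg_cancel, Real.exp_zero, ENNReal.ofReal_one, mul_one]

/-- boundedness of the Bergman-type operator `Π̃` on `L²_Φ(V)` (Schur test). -/
theorem statement11 (n : ℕ)
    (V : Set (En n)) (hV : IsOpen V)
    (Φ : En n → ℝ) (hΦ : ContinuousOn Φ V)
    (Ψt : En n → En n → ℂ)
    (hΨt : ContinuousOn (fun p : En n × En n => Ψt p.1 p.2) (V ×ˢ V))
    (C₀ M : ℝ) (hC₀ : 0 < C₀) (hM : 0 < M)
    (hdiag : ∀ y ∈ V, (Ψt y y).re = Φ y)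
    (hub : ∀ x ∈ V, ∀ y ∈ V, 2 * (Ψt x y).re ≤ Φ x + Φ y - (1/C₀) * ‖x - y‖ ^ 2)
    (b : En n → En n → ℂ) (hb : Measurable fun p : En n × En n => b p.1 p.2)
    (hbM : ∀ x ∈ V, ∀ y ∈ V, ‖b x y‖ ≤ M) :
    ∃ C₁ : ℝ, 0 < C₁ ∧ ∀ h ∈ Set.Ioc (0:ℝ) 1, ∀ u : En n → ℂ, Measurable u →
      wNormE n V Φ h u < ⊤ →
      (∀ᵐ x ∂(volume.restrict V),
        Integrable (fun y => Complex.exp (((2 / h : ℝ) : ℂ) * (Ψt x y - Ψt y y)) * b x y * u y)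
          (volume.restrict V)) ∧
      wNormE n V Φ h (PiOp n V Ψt b h u) ≤ ENNReal.ofReal C₁ * wNormE n V Φ h u := by
  refine ⟨M * (Real.pi * C₀) ^ n, by positivity, ?_⟩
  rintro h ⟨hh, -⟩ u hu hfin
  have hVm : MeasurableSet V := hV.measurableSet
  set K : En n → En n → ℝ≥0∞ := gaussKernel (1 / (C₀ * h)) M
  set A := ENNReal.ofReal (h ^ n) * ENNReal.ofReal (M * (Real.pi * C₀) ^ n)
  have hK : ∀ x, ∫⁻ y in V, K x y ≤ A := setLIntegral_gaussKernel_En_le hC₀ hh hM.le V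
  have hA : A ≠ ∞ := ENNReal.mul_ne_top ENNReal.ofReal_ne_top ENNReal.ofReal_ne_top
  have hKcol : ∀ y, ∫⁻ x in V, K x y ≤ A := fun y => by
    simpa only [K, gaussKernel_comm _ M _ y] using hK y
  have hw : AEMeasurable (weightedENorm Φ h u) (volume.restrict V) :=
    hu.enorm.aemeasurable.mul ((hΦ.aemeasurable hVm).neg.div_const h).exp.ennreal_ofReal
  have hw2 : ∫⁻ x in V, weightedENorm Φ h u x ^ 2 ≠ ∞ := by
    rw [← wNormE_sq]; exact ENNReal.pow_ne_top hfin.ne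
  have hdom := fun x (hx : x ∈ V) => setLIntegral_enorm_piIntegrand_le (μ := volume) (u := u)
    hVm hh hdiag hub hbM hx
  refine ⟨?_, ?_⟩
  · filter_upwards [ae_restrict_mem hVm, schur_test_ae_lintegral_mul_lt_top
      (measurable_gaussKernel _ M) hw hK hKcol hA hA hw2] with x hx hT
    exact ⟨aestronglyMeasurable_piIntegrand hVm hΨt hb hu h hx,
      (hdom x hx).trans_lt (ENNReal.mul_lt_top ENNReal.ofReal_lt_top hT)⟩
  have hscale : ENNReal.ofReal (h ^ n)⁻¹ * ENNReal.ofReal (h ^ n) = 1 := by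
    rw [← ENNReal.ofReal_mul (by positivity), inv_mul_cancel₀ (by positivity), ENNReal.ofReal_one]
  rw [← ENNReal.pow_le_pow_left_iff two_ne_zero, mul_pow, wNormE_sq, wNormE_sq]
  calc ∫⁻ x in V, weightedENorm Φ h (PiOp n V Ψt b h u) x ^ 2
      ≤ ∫⁻ x in V, (ENNReal.ofReal (h ^ n)⁻¹ * ∫⁻ y in V, K x y * weightedENorm Φ h u y) ^ 2 :=
        setLIntegral_mono_ae' hVm (ae_of_all _ fun x hx => by
          gcongr; exact weightedENorm_PiOp_le hh (hdom x hx))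
    _ ≤ ENNReal.ofReal (h ^ n)⁻¹ ^ 2 * (A * A * ∫⁻ x in V, weightedENorm Φ h u x ^ 2) := by
        simp_rw [mul_pow]
        rw [lintegral_const_mul' _ _ (by simp)]
        gcongr
        exact schur_test_lintegral_sq_le (measurable_gaussKernel _ M) hw hK hKcol
    _ = (ENNReal.ofReal (h ^ n)⁻¹ * ENNReal.ofReal (h ^ n)) ^ 2 *
          ENNReal.ofReal (M * (Real.pi * C₀) ^ n) ^ 2 * ∫⁻ x in V, weightedENorm Φ h u x ^ 2 := by
        ring
    _ = _ := by rw [hscale, one_pow, one_mul]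

end
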